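/- Let G = Σ1 × ⋯ × Σr be a direct product of r ≥ 2 genus-2 surface groups Σk = ⟨a1^(k), a2^(k), b1^(k), b2^(k) | [a1^(k),a2^(k)][b1^(k),b2^(k)]⟩, and let φ: G → ℤ² be the homomorphism sending every a_i^(k) and b_i^(k) to the i-th standard basis vector of ℤ². Then the kernel K = ker φ is generated by the finite set {c1, c2, d} ∪ {f_i^(k), g_i^(k) : i = 1,2, k = 1,…,r}, where c_i = a_i^(1)(b_i^(1))^{-1}, d = [b_1^(1), b_2^(1)], f_i^(k) = a_i^(1)(a_i^(k))^{-1}, and g_i^(k) = b_i^(1)(b_i^(k))^{-1}. -/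

import Mathlib

open FreeGroup
open scoped commutatorElement

def surfRels : Set (FreeGroup (Fin 4)) :=
  {⁅FreeGroup.of (0 : Fin 4), FreeGroup.of (1 : Fin 4)⁆ * ⁅FreeGroup.of (2 : Fin 4), FreeGroup.of (3 : Fin 4)⁆}

/-- The genus-2 surface group. -/
abbrev Surf := PresentedGroup surfRels

def a (i : Fin 2) : Surf := PresentedGroup.of ⟨i.val, by omega⟩
def b (i : Fin 2) : Surf := PresentedGroup.of ⟨i.val + 2, by omega⟩

abbrev M := Multiplicative (ℤ × ℤ)

def φgen : Fin 4 → M :=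
  fun n => Multiplicative.ofAdd (if n.val = 0 ∨ n.val = 2 then ((1 : ℤ), (0 : ℤ)) else ((0 : ℤ), (1 : ℤ)))

lemma φrels : ∀ r ∈ surfRels, FreeGroup.lift φgen r = 1 := by
  rintro r hr
  simp only [surfRels, Set.mem_singleton_iff] at hr
  subst hr
  have h1 : (FreeGroup.lift φgen) (⁅FreeGroup.of (0 : Fin 4), FreeGroup.of (1 : Fin 4)⁆ * ⁅FreeGroup.of (2 : Fin 4), FreeGroup.of (3 : Fin 4)⁆) = ⁅φgen 0, φgen 1⁆ * ⁅φgen 2, φgen 3⁆ := by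
    simp [commutatorElement_def]
  rw [h1, commutatorElement_eq_one_iff_mul_comm.mpr (mul_comm _ _),
    commutatorElement_eq_one_iff_mul_comm.mpr (mul_comm _ _), one_mul]

/-- The homomorphism Σ → ℤ² sending aᵢ, bᵢ to the i-th standard basis vector. -/
def φ1 : Surf →* M := PresentedGroup.toGroup φrels

/-- The direct product of r genus-2 surface groups. -/
abbrev GG (r : ℕ) := ∀ _ : Fin r, Surf

def A (r : ℕ) (i : Fin 2) (k : Fin r) : GG r := Pi.mulSingle k (a i)
def B (r : ℕ) (i : Fin 2) (k : Fin r) : GG r := Pi.mulSingle k (b i)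

/-- The homomorphism G = Σ₁ × ⋯ × Σr → ℤ² sending all aᵢ, bᵢ to eᵢ. -/
def Φ (r : ℕ) : GG r →* M := ∏ k : Fin r, φ1.comp (Pi.evalMonoidHom (fun _ => Surf) k)

/-!
Let `H` be the subgroup generated by the given set and `o`, `z` two different factors. A letter
of `Σ` placed in factor `o` differs from the same letter placed in factor `z` by an element of `H`,
and the latter commutes with everything in factor `o`. Hence conjugation by the letters of
factor `o` preserves the part of `H` lying in factor `o`, which is therefore a normal subgroup
of `Σ`; modulo it `aᵢ ≡ bᵢ` and `[a₁, a₂] = [b₁, b₂]⁻¹ ≡ 1`, so the quotient map factors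
through `φ` and this subgroup contains `ker φ`.
The map `g ↦ g⁽ᵒ⁾ (g⁽ᵏ⁾)⁻¹` is multiplicative up to commutators in factor `o`, so `H` contains
it for every `g`, hence contains `ker φ` in every factor, hence `[G, G]`. So `H` is normal, and
`G ⧸ H` is abelian and generated by the images of `a₁⁽ᵒ⁾, a₂⁽ᵒ⁾`, on which `G → G ⧸ H` factors
through `Φ`.
-/

section CommutingHoms

variable {Γ G : Type*} [Group Γ] [Group G] {f₁ f₂ : Γ →* G}

theorem map_conj_eq_conj_map_mul_inv (hf : ∀ g h, Commute (f₁ g) (f₂ h)) (g u : Γ) :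
    f₁ (g * u * g⁻¹) = (f₁ g * (f₂ g)⁻¹) * f₁ u * (f₁ g * (f₂ g)⁻¹)⁻¹ := by
  rw [mul_inv_rev, inv_inv, mul_assoc (f₁ g), ← (hf u g).inv_right.eq]
  simp only [_root_.map_mul, _root_.map_inv, mul_assoc, inv_mul_cancel_left]

theorem map_mul_mul_inv_map_mul (hf : ∀ g h, Commute (f₁ g) (f₂ h)) (g h : Γ) :
    f₁ (g * h) * (f₂ (g * h))⁻¹ =
      f₁ ⁅g, h⁆ * (f₁ h * (f₂ h)⁻¹) * (f₁ g * (f₂ g)⁻¹) := by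
  rw [commutatorElement_def]
  simp only [_root_.map_mul, _root_.map_inv, mul_inv_rev, mul_assoc, inv_mul_cancel_left]
  rw [← mul_assoc (f₂ h)⁻¹, ← (hf g h).inv_right.eq, mul_assoc, inv_mul_cancel_left]

theorem comap_normal_of_map_mul_inv_mem (hf : ∀ g h, Commute (f₁ g) (f₂ h)) {H : Subgroup G}
    {X : Set Γ} (hX : Subgroup.closure X = ⊤) (hXH : ∀ x ∈ X, f₁ x * (f₂ x)⁻¹ ∈ H) :
    (H.comap f₁).Normal := by
  rw [← Subgroup.normalizer_eq_top_iff, eq_top_iff, ← hX, Subgroup.closure_le]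
  intro x hx u
  simp only [SetLike.mem_coe, Subgroup.mem_comap, map_conj_eq_conj_map_mul_inv hf]
  exact Subgroup.mem_normalizer_iff.mp (H.le_normalizer (hXH x hx)) _

theorem map_mul_inv_mem_of_closure (hf : ∀ g h, Commute (f₁ g) (f₂ h)) {H : Subgroup G}
    {X : Set Γ} (hX : Subgroup.closure X = ⊤) (hXH : ∀ x ∈ X, f₁ x * (f₂ x)⁻¹ ∈ H)
    (hcomm : ∀ g h : Γ, f₁ ⁅g, h⁆ ∈ H) (g : Γ) : f₁ g * (f₂ g)⁻¹ ∈ H := by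
  have hg : g ∈ Subgroup.closure X := hX ▸ Subgroup.mem_top g
  induction hg using Subgroup.closure_induction with
  | mem x hx => exact hXH x hx
  | one => simp
  | mul g h _ _ hg hh =>
    rw [map_mul_mul_inv_map_mul hf]
    exact mul_mem (mul_mem (hcomm g h) hh) hg
  | inv g _ hg =>
    rw [_root_.map_inv, _root_.map_inv, inv_inv, (hf g g).inv_left.eq, ← inv_inv (f₂ g),
      ← mul_inv_rev]
    exact inv_mem hg

end CommutingHoms

theorem MonoidHom.pi_ext_of_comp_mulSingle {ι : Type*} [Finite ι] [DecidableEq ι]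
    {G : ι → Type*} [∀ i, Group (G i)] {Q : Type*} [Group Q] {f g : (∀ i, G i) →* Q}
    (h : ∀ i, f.comp (MonoidHom.mulSingle G i) = g.comp (MonoidHom.mulSingle G i)) : f = g :=
  MonoidHom.ext fun x => Subgroup.pi_mem_of_mulSingle_mem (H := MonoidHom.eqLocus f g) x
    fun i => DFunLike.congr_fun (h i) (x i)

theorem commutatorElement_mem_ker {G A : Type*} [Group G] [CommGroup A] (f : G →* A)
    (g h : G) : ⁅g, h⁆ ∈ f.ker :=
  Abelianization.commutator_subset_ker f
    (Subgroup.commutator_mem_commutator (Subgroup.mem_top g) (Subgroup.mem_top h))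

def zpowersPairHom {Q : Type*} [Group Q] {q : Fin 2 → Q} (hq : Commute (q 0) (q 1)) : M →* Q :=
  MonoidHom.mk' (fun m => q 0 ^ (Multiplicative.toAdd m).1 * q 1 ^ (Multiplicative.toAdd m).2)
    fun x y => by
      simp only [toAdd_mul, Prod.fst_add, Prod.snd_add, zpow_add]
      exact (hq.zpow_zpow _ _).mul_mul_mul_comm _ _

theorem commutator_a_mul_commutator_b : ⁅a 0, a 1⁆ * ⁅b 0, b 1⁆ = 1 := by
  have h := PresentedGroup.one_of_mem (rels := surfRels) (Set.mem_singleton _)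
  simp only [_root_.map_mul, map_commutatorElement] at h
  exact h

theorem eq_zpowersPairHom_comp_φ1 {Q : Type*} [Group Q] {q : Fin 2 → Q}
    (hq : Commute (q 0) (q 1)) {f : Surf →* Q} (ha : ∀ i, f (a i) = q i)
    (hb : ∀ i, f (b i) = q i) : f = (zpowersPairHom hq).comp φ1 := by
  refine PresentedGroup.ext fun n => ?_
  rw [MonoidHom.comp_apply, φ1, PresentedGroup.toGroup.of]
  fin_cases n
  · exact (ha 0).trans (by simp [zpowersPairHom, φgen])
  · exact (ha 1).trans (by simp [zpowersPairHom, φgen])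
  · exact (hb 0).trans (by simp [zpowersPairHom, φgen])
  · exact (hb 1).trans (by simp [zpowersPairHom, φgen])

theorem Φ_comp_mulSingle (r : ℕ) (k : Fin r) :
    (Φ r).comp (MonoidHom.mulSingle (fun _ => Surf) k) = φ1 := by
  refine MonoidHom.ext fun x => ?_
  simp [Φ, Pi.mulSingle_apply, apply_ite φ1]

theorem eq_zpowersPairHom_comp_Φ {r : ℕ} {Q : Type*} [Group Q] {q : Fin 2 → Q}
    (hq : Commute (q 0) (q 1)) {f : GG r →* Q} (ha : ∀ i k, f (A r i k) = q i)
    (hb : ∀ i k, f (B r i k) = q i) : f = (zpowersPairHom hq).comp (Φ r) :=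
  MonoidHom.pi_ext_of_comp_mulSingle fun k => by
    rw [MonoidHom.comp_assoc, Φ_comp_mulSingle]
    exact eq_zpowersPairHom_comp_φ1 hq (fun i => ha i k) (fun i => hb i k)

def kerGens (r : ℕ) (o : Fin r) : Set (GG r) :=
  {A r 0 o * (B r 0 o)⁻¹, A r 1 o * (B r 1 o)⁻¹, ⁅B r 0 o, B r 1 o⁆} ∪
    {x | ∃ (i : Fin 2) (k : Fin r), x = A r i o * (A r i k)⁻¹} ∪
    {x | ∃ (i : Fin 2) (k : Fin r), x = B r i o * (B r i k)⁻¹}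

theorem kerGens_subset_ker {r : ℕ} (o : Fin r) : kerGens r o ⊆ (Φ r).ker := by
  have hA : ∀ i k, Φ r (A r i k) = φ1 (a i) := fun i k =>
    DFunLike.congr_fun (Φ_comp_mulSingle r k) _
  have hB : ∀ i k, Φ r (B r i k) = φ1 (a i) := fun i k =>
    (DFunLike.congr_fun (Φ_comp_mulSingle r k) _).trans (by fin_cases i <;> rfl)
  rintro _ (((rfl | rfl | rfl) | ⟨i, k, rfl⟩) | ⟨i, k, rfl⟩)
  · simp [hA, hB]
  · simp [hA, hB]
  · exact commutatorElement_mem_ker _ _ _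
  · simp [hA]
  · simp [hB]

section KerGens

open QuotientGroup

variable {r : ℕ} (o : Fin r)

local notation "H" => Subgroup.closure (kerGens r o)

local notation "ι" => MonoidHom.mulSingle (fun _ : Fin r => Surf)

theorem A_mul_inv_B_mem (i : Fin 2) : A r i o * (B r i o)⁻¹ ∈ H :=
  Subgroup.subset_closure (Or.inl (Or.inl (by fin_cases i <;> simp)))

theorem commutator_B_mem : ⁅B r 0 o, B r 1 o⁆ ∈ H :=
  Subgroup.subset_closure (Or.inl (Or.inl (by simp)))

theorem A_mul_inv_A_mem (i : Fin 2) (k : Fin r) : A r i o * (A r i k)⁻¹ ∈ H :=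
  Subgroup.subset_closure (Or.inl (Or.inr ⟨i, k, rfl⟩))

theorem B_mul_inv_B_mem (i : Fin 2) (k : Fin r) : B r i o * (B r i k)⁻¹ ∈ H :=
  Subgroup.subset_closure (Or.inr ⟨i, k, rfl⟩)

theorem mulSingle_mul_inv_mulSingle_mem (k : Fin r) :
    ∀ x ∈ Set.range (PresentedGroup.of (rels := surfRels)),
      Pi.mulSingle o x * (Pi.mulSingle k x)⁻¹ ∈ H := by
  rintro _ ⟨n, rfl⟩
  fin_cases n
  exacts [A_mul_inv_A_mem o 0 k, A_mul_inv_A_mem o 1 k, B_mul_inv_B_mem o 0 k,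
    B_mul_inv_B_mem o 1 k]

theorem ker_φ1_le_comap_mulSingle {z : Fin r} (hzo : z ≠ o) :
    φ1.ker ≤ Subgroup.comap (ι o) H := by
  set N := Subgroup.comap (ι o) H
  have : N.Normal := comap_normal_of_map_mul_inv_mem (f₁ := ι o) (f₂ := ι z)
    (Pi.mulSingle_commute (f := fun _ : Fin r => Surf) hzo.symm)
    (PresentedGroup.closure_range_of _) (mulSingle_mul_inv_mulSingle_mem o z)
  have hb : ∀ i, mk' N (b i) = mk' N (a i) := fun i => by
    rw [mk'_apply, mk'_apply, eq_comm, eq_iff_div_mem, Subgroup.mem_comap, div_eq_mul_inv,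
      _root_.map_mul, _root_.map_inv]
    exact A_mul_inv_B_mem o i
  have hq : Commute (mk' N (a 0)) (mk' N (a 1)) := by
    rw [← commutatorElement_eq_one_iff_commute, ← map_commutatorElement, mk'_apply, eq_one_iff,
      Subgroup.mem_comap, eq_inv_of_mul_eq_one_left commutator_a_mul_commutator_b,
      _root_.map_inv, map_commutatorElement]
    exact inv_mem (commutator_B_mem o)
  intro g hg
  rw [← ker_mk' N, MonoidHom.mem_ker,
    eq_zpowersPairHom_comp_φ1 (q := fun i => mk' N (a i)) hq (fun _ => rfl) hb,
    MonoidHom.comp_apply, hg, _root_.map_one]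

theorem mulSingle_mem_of_mem_ker {z : Fin r} (hzo : z ≠ o) (k : Fin r) {g : Surf}
    (hg : g ∈ φ1.ker) : Pi.mulSingle k g ∈ H := by
  have hker := ker_φ1_le_comap_mulSingle o hzo
  by_cases hk : k = o
  · exact hk ▸ hker hg
  have hτ := map_mul_inv_mem_of_closure (f₁ := ι o) (f₂ := ι k)
    (Pi.mulSingle_commute (f := fun _ : Fin r => Surf) (Ne.symm hk))
    (PresentedGroup.closure_range_of _) (mulSingle_mul_inv_mulSingle_mem o k)
    (fun g h => hker (commutatorElement_mem_ker φ1 g h)) g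
  -- `g⁽ᵏ⁾ = (g⁽ᵒ⁾ (g⁽ᵏ⁾)⁻¹)⁻¹ g⁽ᵒ⁾`
  simpa using mul_mem (inv_mem hτ) (hker hg)

theorem commutator_le_closure_kerGens {z : Fin r} (hzo : z ≠ o) : commutator (GG r) ≤ H := by
  rw [commutator_eq_closure, Subgroup.closure_le]
  rintro _ ⟨x, y, rfl⟩
  exact Subgroup.pi_mem_of_mulSingle_mem _ fun k =>
    mulSingle_mem_of_mem_ker o hzo k (commutatorElement_mem_ker φ1 (x k) (y k))

theorem ker_Φ_le_closure_kerGens {z : Fin r} (hzo : z ≠ o) : (Φ r).ker ≤ H := by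
  have : Subgroup.Normal H :=
    Subgroup.Normal.of_commutator_le (G := GG r) (commutator_le_closure_kerGens o hzo)
  have hπ : ∀ x y, x * y⁻¹ ∈ H → mk' H x = mk' H y :=
    fun x y h => by rwa [mk'_apply, mk'_apply, eq_iff_div_mem, div_eq_mul_inv]
  have hq : Commute (mk' H (A r 0 o)) (mk' H (A r 1 o)) := by
    rw [← commutatorElement_eq_one_iff_commute, ← map_commutatorElement, mk'_apply, eq_one_iff]
    exact commutator_le_closure_kerGens o hzo
      (Subgroup.commutator_mem_commutator (Subgroup.mem_top _) (Subgroup.mem_top _))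
  have hA : ∀ i k, mk' H (A r i k) = mk' H (A r i o) :=
    fun i k => (hπ _ _ (A_mul_inv_A_mem o i k)).symm
  have hB : ∀ i k, mk' H (B r i k) = mk' H (A r i o) :=
    fun i k => ((hπ _ _ (A_mul_inv_B_mem o i)).trans (hπ _ _ (B_mul_inv_B_mem o i k))).symm
  intro x hx
  rw [← ker_mk' H, MonoidHom.mem_ker,
    eq_zpowersPairHom_comp_Φ (q := fun i => mk' H (A r i o)) hq hA hB,
    MonoidHom.comp_apply, hx, _root_.map_one]

end KerGens

theorem stmt2 (r : ℕ) (hr : 2 ≤ r) :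
    Subgroup.closure
      ({A r 0 ⟨0, by omega⟩ * (B r 0 ⟨0, by omega⟩)⁻¹,
        A r 1 ⟨0, by omega⟩ * (B r 1 ⟨0, by omega⟩)⁻¹,
        ⁅B r 0 ⟨0, by omega⟩, B r 1 ⟨0, by omega⟩⁆} ∪
       {x | ∃ (i : Fin 2) (k : Fin r), x = A r i ⟨0, by omega⟩ * (A r i k)⁻¹} ∪
       {x | ∃ (i : Fin 2) (k : Fin r), x = B r i ⟨0, by omega⟩ * (B r i k)⁻¹}) = (Φ r).ker :=
  le_antisymm ((Subgroup.closure_le _).mpr (kerGens_subset_ker _))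
    (ker_Φ_le_closure_kerGens (z := ⟨1, by omega⟩) _ (by simp))
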